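/- For every integer h ≥ 4, D_R(C_h) − D_R(S) = (h² − 8h + 6)/3, where C_h is the cycle on h vertices and S is the graph on h vertices obtained from the cycle C_{h−1} by attaching one pendent vertex to a vertex u of C_{h−1}. -/

import Mathlib

open Finset

/-- Effective resistance between two vertices of a graph (for a connected graph
this is the effective resistance when every edge is a unit resistor), defined via
the matrix-tree / spanning-two-forest determinant formula. -/
noncomputable def effRes {V : Type*} [Finite V] (G : SimpleGraph V) (u v : V) : ℝ :=
  letI := Fintype.ofFinite V
  letI := Classical.decEq V
  letI : DecidableRel G.Adj := Classical.decRel _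
  if u = v then 0
  else
    Matrix.det ((G.lapMatrix ℝ).submatrix
        (fun w : {w : V // w ≠ u ∧ w ≠ v} => (w : V)) (fun w => (w : V)))
      / Matrix.det ((G.lapMatrix ℝ).submatrix
        (fun w : {w : V // w ≠ u} => (w : V)) (fun w => (w : V)))

/-- The degree resistance distance `D_R(G) = Σ_{ {u,v} ⊆ V } (d(u)+d(v)) R(u,v)`. -/
noncomputable def degRes {V : Type*} [Finite V] (G : SimpleGraph V) : ℝ :=
  letI := Fintype.ofFinite V
  letI := Classical.decEq V
  letI : DecidableRel G.Adj := Classical.decRel _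
  (1 / 2) * ∑ u : V, ∑ v : V, ((G.degree u : ℝ) + (G.degree v : ℝ)) * effRes G u v

/-- The Kirchhoff index `Kf(G) = Σ_{ {u,v} ⊆ V } R(u,v)`. -/
noncomputable def kirchhoffIndex {V : Type*} [Finite V] (G : SimpleGraph V) : ℝ :=
  letI := Fintype.ofFinite V
  (1 / 2) * ∑ u : V, ∑ v : V, effRes G u v

/-- `Kf_v(G) = Σ_{u ∈ V} R(u,v)`. -/
noncomputable def Kfv {V : Type*} [Finite V] (G : SimpleGraph V) (v : V) : ℝ :=
  letI := Fintype.ofFinite V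
  ∑ u : V, effRes G u v

/-- `D_v(G) = Σ_{u ∈ V} d(u) R(u,v)`. -/
noncomputable def Dv {V : Type*} [Finite V] (G : SimpleGraph V) (v : V) : ℝ :=
  letI := Fintype.ofFinite V
  letI := Classical.decEq V
  letI : DecidableRel G.Adj := Classical.decRel _
  ∑ u : V, (G.degree u : ℝ) * effRes G u v

/-- A subgraph is a cycle if it is connected and `2`-regular. -/
def IsCycleSubgraph {V : Type*} {G : SimpleGraph V} (H : G.Subgraph) : Prop :=
  H.coe.Connected ∧ ∀ v ∈ H.verts, {u | H.Adj v u}.ncard = 2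

/-- A cactus is a connected graph in which any two distinct cycles share at most
one vertex (equivalently, every block is an edge or a cycle). -/
def IsCactus {V : Type*} (G : SimpleGraph V) : Prop :=
  G.Connected ∧ ∀ H₁ H₂ : G.Subgraph, IsCycleSubgraph H₁ → IsCycleSubgraph H₂ →
    H₁ ≠ H₂ → (H₁.verts ∩ H₂.verts).ncard ≤ 1

/-- The number of cycles of a graph. -/
noncomputable def numCycles {V : Type*} (G : SimpleGraph V) : ℕ :=
  {H : G.Subgraph | IsCycleSubgraph H}.ncard

/-- `G ∈ Cact(n;t)`: `G` is a cactus with `n` vertices and `t` cycles. -/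
def MemCact {V : Type*} (n t : ℕ) (G : SimpleGraph V) : Prop :=
  IsCactus G ∧ Nat.card V = n ∧ numCycles G = t

/-- `G⁰(n,t)`: `t` triangles (on vertices `2i+1, 2i+2`, `i < t`) and `n - 2t - 1`
pendent edges, all sharing the common vertex `0`. -/
def G0 (n t : ℕ) : SimpleGraph (Fin n) :=
  SimpleGraph.fromRel (fun a b =>
    a.val = 0 ∨ (Odd a.val ∧ b.val = a.val + 1 ∧ b.val ≤ 2 * t))

/-- The graph `S` on `h` vertices: the cycle `C_{h-1}` on the vertices
`0, 1, …, h-2` together with the pendent vertex `h-1` attached to `0`. -/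
def cycleWithPendent (h : ℕ) : SimpleGraph (Fin h) :=
  SimpleGraph.fromRel (fun a b =>
    (b.val = a.val + 1 ∧ b.val ≤ h - 2) ∨ (a.val = 0 ∧ b.val = h - 2) ∨
    (a.val = 0 ∧ b.val = h - 1))

/-!
Resistances are read off from potentials: on a connected graph, if `L x = e_v - e_u` and
`x u = 0`, then Cramer's rule for the Laplacian with row and column `u` deleted gives
`R(u, v) = x v`. On the cycle `C_N` the potential is piecewise linear, so two vertices at cyclic
distance `k` have resistance `k (N - k) / N` and every vertex has resistance sum `(N² - 1) / 6`.
A pendent edge carries current only when its leaf is an endpoint, so `S` keeps the resistances of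
`C_{h-1}` between cycle vertices and the leaf is at resistance `1 + R(u, i)` from a cycle vertex
`i`. Weighting by degrees gives `D_R(C_h) = (h³ - h) / 3` and
`D_R(S) = (h + 1) ((h - 1)² - 1) / 3 + 3h - 2`.
-/

open Matrix

namespace Matrix

variable {V R : Type*} [Fintype V] [DecidableEq V]

theorem det_updateRow_single_self [CommRing R] (A : Matrix V V R) (v : V) :
    (A.updateRow v (Pi.single v 1)).det =
      (A.submatrix (↑) (↑) : Matrix {w // w ≠ v} {w // w ≠ v} R).det := by
  let e := Equiv.sumCompl (· ≠ v)
  have hblocks : (A.updateRow v (Pi.single v 1)).submatrix e e =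
      fromBlocks (A.submatrix (↑) (↑)) (A.submatrix (↑) (↑)) 0 1 := by
    refine Matrix.ext fun i j => ?_
    rcases i with ⟨i, hi⟩ | ⟨i, hi⟩ <;> rcases j with ⟨j, hj⟩ | ⟨j, hj⟩
    · simp [e, updateRow_apply, hi]
    · simp [e, updateRow_apply, hi]
    · obtain rfl := not_not.1 hi
      simp [e, Ne.symm hj]
    · obtain rfl := not_not.1 hi
      obtain rfl := not_not.1 hj
      simp [e]
  rw [← det_submatrix_equiv_self e, hblocks, det_fromBlocks_zero₂₁, det_one, mul_one]

theorem submatrix_ne_mulVec_apply_of_eq_zero [NonUnitalNonAssocSemiring R] (A : Matrix V V R)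
    {u : V} {x : V → R} (hx : x u = 0) (w : {w // w ≠ u}) :
    ((A.submatrix (↑) (↑) : Matrix {w // w ≠ u} {w // w ≠ u} R) *ᵥ fun z => x z) w =
      (A *ᵥ x) w := by
  simp only [mulVec, dotProduct, submatrix_apply]
  rw [Fintype.sum_eq_add_sum_subtype_ne _ u, hx, mul_zero, zero_add]

theorem det_mul_eq_adjugate_of_mulVec_eq_single [CommRing R] {A : Matrix V V R} {y : V → R}
    {i : V} (hy : A *ᵥ y = Pi.single i 1) : A.det * y i = A.adjugate i i := by
  have := congrArg (A.adjugate *ᵥ ·) hy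
  simp only [mulVec_mulVec, adjugate_mul, smul_mulVec, one_mulVec, mulVec_single] at this
  simpa using congrFun this i

end Matrix

theorem Fin.val_sub_eq_one_iff {n : ℕ} {a b : Fin (n + 2)} :
    (a - b).val = 1 ↔ a.val = b.val + 1 ∨ (a.val = 0 ∧ b.val = n + 1) := by
  rcases le_or_gt b a with hba | hab
  · rw [Fin.coe_sub_iff_le.2 hba]
    have : b.val ≤ a.val := hba
    omega
  · rw [Fin.coe_sub_iff_lt.2 hab]
    have : a.val < b.val := hab
    omega

/-- The voltage at position `t` of an `N`-cycle grounded at `0` when a unit current enters at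
position `k`: the arcs of lengths `k` and `N - k` carry the currents `(N - k) / N` and `k / N`,
and the truncated subtraction `t - k` produces the kink at `k`. -/
noncomputable def cyclePotential (N k t : ℕ) : ℝ := t * (N - k) / N - (t - k : ℕ)

theorem cyclePotential_zero (N k : ℕ) : cyclePotential N k 0 = 0 := by
  simp [cyclePotential]

theorem cyclePotential_diag (N k : ℕ) : cyclePotential N k k = k * (N - k) / N := by
  simp [cyclePotential]

theorem cyclePotential_len {N k : ℕ} (hk : k ≤ N) : cyclePotential N k N = 0 := by
  rcases N.eq_zero_or_pos with rfl | hN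
  · simp [cyclePotential]
  · rw [cyclePotential, mul_div_cancel_left₀ _ (by exact_mod_cast hN.ne'), Nat.cast_sub hk,
      sub_self]

theorem cyclePotential_second_diff {N k t : ℕ} (ht : 1 ≤ t) :
    2 * cyclePotential N k t - cyclePotential N k (t - 1) - cyclePotential N k (t + 1) =
      if t = k then 1 else 0 := by
  have hkink : ((t - 1 - k : ℕ) : ℝ) + (t + 1 - k : ℕ) - 2 * (t - k : ℕ) =
      if t = k then 1 else 0 := by
    split_ifs with h
    · subst h; simp
    · have : ((t - 1 - k : ℕ) : ℤ) + (t + 1 - k : ℕ) - 2 * (t - k : ℕ) = 0 := by omega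
      exact_mod_cast this
  rw [← hkink, cyclePotential, cyclePotential, cyclePotential, Nat.cast_sub ht]
  push_cast
  ring

theorem cyclePotential_one_add_pred {N k : ℕ} (hk : k < N) :
    cyclePotential N k 1 + cyclePotential N k (N - 1) = if k = 0 then 0 else 1 := by
  have hN : (N : ℝ) ≠ 0 := by exact_mod_cast (by omega : N ≠ 0)
  have hlin : ((1 : ℕ) : ℝ) * (N - k) / N + ((N - 1 : ℕ) : ℝ) * (N - k) / N = N - k := by
    rw [Nat.cast_sub (by omega : 1 ≤ N)]
    field_simp
    ring
  have hkink : ((1 - k : ℕ) : ℝ) + (N - 1 - k : ℕ) = N - k - if k = 0 then 0 else 1 := by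
    split_ifs with h
    · exact_mod_cast (by omega : ((1 - k : ℕ) : ℤ) + (N - 1 - k : ℕ) = N - k - 0)
    · exact_mod_cast (by omega : ((1 - k : ℕ) : ℤ) + (N - 1 - k : ℕ) = N - k - 1)
  rw [cyclePotential, cyclePotential]
  linarith

theorem sum_range_mul_sub (M : ℝ) (N : ℕ) :
    ∑ k ∈ Finset.range N, (k : ℝ) * (M - k) =
      M * N * (N - 1) / 2 - N * (N - 1) * (2 * N - 1) / 6 := by
  induction N with
  | zero => simp
  | succ N ih => rw [Finset.sum_range_succ, ih]; push_cast; ring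

theorem sum_range_cyclePotential_diag {N : ℕ} (hN : N ≠ 0) :
    ∑ k ∈ Finset.range N, cyclePotential N k k = ((N : ℝ) ^ 2 - 1) / 6 := by
  simp_rw [cyclePotential_diag, ← Finset.sum_div, sum_range_mul_sub]
  field_simp
  ring

namespace SimpleGraph

theorem effRes_self {V : Type*} [Finite V] (G : SimpleGraph V) (u : V) : effRes G u u = 0 := by
  simp [effRes]

theorem degRes_eq_sum_degree_mul_sum {V : Type*} [Fintype V] (G : SimpleGraph V)
    [DecidableRel G.Adj] :
    degRes G = (∑ u, (G.degree u : ℝ) * ∑ v, effRes G u v +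
      ∑ v, (G.degree v : ℝ) * ∑ u, effRes G u v) / 2 := by
  have hdef :
      degRes G = 1 / 2 * ∑ u, ∑ v, ((G.degree u : ℝ) + G.degree v) * effRes G u v := by
    unfold degRes
    congr!
  simp only [hdef, add_mul, Finset.sum_add_distrib, Finset.mul_sum]
  rw [Finset.sum_comm (f := fun u v => (G.degree v : ℝ) * effRes G u v)]
  ring

section Laplacian

variable {V : Type*} [Fintype V] [DecidableEq V] {G : SimpleGraph V} [DecidableRel G.Adj]

theorem lapMatrix_mulVec_apply_eq_sum_sub (x : V → ℝ) (v : V) :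
    (G.lapMatrix ℝ *ᵥ x) v = ∑ u ∈ G.neighborFinset v, (x v - x u) := by
  rw [lapMatrix_mulVec_apply, Finset.sum_sub_distrib, Finset.sum_const,
    card_neighborFinset_eq_degree, nsmul_eq_mul]

theorem det_lapMatrix_submatrix_ne_zero (hG : G.Connected) (u : V) :
    ((G.lapMatrix ℝ).submatrix (↑) (↑) :
      Matrix {w // w ≠ u} {w // w ≠ u} ℝ).det ≠ 0 := by
  intro hdet
  obtain ⟨y, hy0, hy⟩ := exists_mulVec_eq_zero_iff.2 hdet
  let x : V → ℝ := fun w => if h : w = u then 0 else y ⟨w, h⟩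
  have hxu : x u = 0 := dif_pos rfl
  have hxy : (fun z : {w // w ≠ u} => x z) = y := funext fun z => dif_neg z.2
  have hLx : ∀ w, x w * (G.lapMatrix ℝ *ᵥ x) w = 0 := fun w => by
    rcases eq_or_ne w u with rfl | hw
    · rw [hxu, zero_mul]
    · rw [← submatrix_ne_mulVec_apply_of_eq_zero _ hxu ⟨w, hw⟩, hxy, hy, Pi.zero_apply,
        mul_zero]
  have hconst := (lapMatrix_toLinearMap₂'_apply'_eq_zero_iff_forall_reachable G x).1 <| by
    rw [toLinearMap₂'_apply', dotProduct]
    exact Finset.sum_eq_zero fun w _ => hLx w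
  refine hy0 (funext fun w => ?_)
  rw [← hxy, Pi.zero_apply]
  exact (hconst w u (hG.preconnected w u)).trans hxu

theorem effRes_eq_of_lapMatrix_mulVec (hG : G.Connected) {u v : V} {x : V → ℝ} (hxu : x u = 0)
    (hx : G.lapMatrix ℝ *ᵥ x = Pi.single v 1 - Pi.single u 1) : effRes G u v = x v := by
  rcases eq_or_ne u v with rfl | huv
  · simp [effRes, hxu]
  set M : Matrix {w // w ≠ u} {w // w ≠ u} ℝ := (G.lapMatrix ℝ).submatrix (↑) (↑)
  let v' : {w // w ≠ u} := ⟨v, huv.symm⟩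
  have hMx : M *ᵥ (fun z => x z) = Pi.single v' 1 := by
    funext w
    rw [submatrix_ne_mulVec_apply_of_eq_zero _ hxu, hx]
    simp [Pi.single_apply, w.2, v', Subtype.ext_iff]
  have hnum : ((G.lapMatrix ℝ).submatrix (↑) (↑) :
      Matrix {w // w ≠ u ∧ w ≠ v} {w // w ≠ u ∧ w ≠ v} ℝ).det = M.adjugate v' v' := by
    let e : {w // w ≠ u ∧ w ≠ v} ≃ {w : {w // w ≠ u} // w ≠ v'} :=
      { toFun := fun w => ⟨⟨w, w.2.1⟩, fun h => w.2.2 (congrArg Subtype.val h)⟩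
        invFun := fun w => ⟨w, w.1.2, fun h => w.2 (Subtype.ext h)⟩ }
    rw [adjugate_apply, det_updateRow_single_self, ← det_submatrix_equiv_self e]
    rfl
  have hxv : x v * M.det = M.adjugate v' v' := by
    rw [mul_comm, det_mul_eq_adjugate_of_mulVec_eq_single hMx]
  rw [← hnum, ← eq_div_iff (det_lapMatrix_submatrix_ne_zero hG u)] at hxv
  rw [hxv, effRes, if_neg huv]
  congr!

end Laplacian

section Cycle

variable {n : ℕ}

theorem cycleGraph_lapMatrix_mulVec_apply (x : Fin (n + 3) → ℝ) (w : Fin (n + 3)) :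
    ((cycleGraph (n + 3)).lapMatrix ℝ *ᵥ x) w = 2 * x w - x (w - 1) - x (w + 1) := by
  have hne : w - 1 ≠ w + 1 := by
    rw [Ne, sub_eq_iff_eq_add, add_assoc, left_eq_add]
    exact ne_of_beq_false rfl
  rw [lapMatrix_mulVec_apply, cycleGraph_degree_three_le, cycleGraph_neighborFinset,
    Finset.sum_pair hne]
  push_cast
  ring

theorem cycleGraph_lapMatrix_mulVec_comp_sub (x : Fin (n + 3) → ℝ) (u : Fin (n + 3)) :
    (cycleGraph (n + 3)).lapMatrix ℝ *ᵥ (fun w => x (w - u)) =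
      fun w => ((cycleGraph (n + 3)).lapMatrix ℝ *ᵥ x) (w - u) := by
  funext w
  simp only [cycleGraph_lapMatrix_mulVec_apply, sub_right_comm w 1 u, sub_add_eq_add_sub]

theorem cycleGraph_lapMatrix_mulVec_cyclePotential (k : Fin (n + 3)) :
    (cycleGraph (n + 3)).lapMatrix ℝ *ᵥ (fun t => cyclePotential (n + 3) k t) =
      Pi.single k 1 - Pi.single 0 1 := by
  funext t
  rw [cycleGraph_lapMatrix_mulVec_apply]
  rcases eq_or_ne t 0 with rfl | ht
  · have hpred : ((0 : Fin (n + 3)) - 1).val = n + 2 := by simp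
    have hwrap : cyclePotential (n + 3) k 1 + cyclePotential (n + 3) k (n + 2) =
        if k.val = 0 then 0 else 1 :=
      cyclePotential_one_add_pred k.2
    rw [hpred, Fin.val_zero, cyclePotential_zero, Fin.zero_add, Fin.val_one, Pi.sub_apply,
      Pi.single_eq_same]
    rcases eq_or_ne k 0 with rfl | hk
    · simp only [Fin.val_zero, if_true, Pi.single_eq_same] at hwrap ⊢
      linarith
    · simp only [Fin.val_eq_zero_iff, hk, if_false] at hwrap
      rw [Pi.single_eq_of_ne hk.symm]
      linarith
  · have hsucc : cyclePotential (n + 3) k (t + 1 : Fin (n + 3)) =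
        cyclePotential (n + 3) k (t + 1 : ℕ) := by
      rw [Fin.val_add_one]
      split_ifs with hlast
      · rw [cyclePotential_zero, hlast, Fin.val_last, cyclePotential_len k.2.le]
      · rfl
    have hpos : 1 ≤ t.val := Nat.one_le_iff_ne_zero.2 (Fin.val_ne_iff.2 ht)
    rw [hsucc, Fin.val_sub_one_of_ne_zero ht, cyclePotential_second_diff hpos]
    simp [Pi.single_apply, ht, Fin.val_eq_val]

theorem cycleGraph_lapMatrix_mulVec_cyclePotential_sub (u v : Fin (n + 3)) :
    (cycleGraph (n + 3)).lapMatrix ℝ *ᵥ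
        (fun w => cyclePotential (n + 3) (v - u : Fin (n + 3)) (w - u : Fin (n + 3))) =
      Pi.single v 1 - Pi.single u 1 := by
  rw [cycleGraph_lapMatrix_mulVec_comp_sub
      (fun t => cyclePotential (n + 3) (v - u : Fin (n + 3)) t),
    cycleGraph_lapMatrix_mulVec_cyclePotential]
  funext w
  simp [Pi.single_apply, sub_eq_zero]

theorem effRes_cycleGraph (u v : Fin (n + 3)) :
    effRes (cycleGraph (n + 3)) u v =
      cyclePotential (n + 3) (v - u : Fin (n + 3)) (v - u : Fin (n + 3)) :=
  effRes_eq_of_lapMatrix_mulVec cycleGraph_connected (by simp [cyclePotential_zero])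
    (cycleGraph_lapMatrix_mulVec_cyclePotential_sub u v)

theorem sum_fin_cyclePotential_diag :
    ∑ k : Fin (n + 3), cyclePotential (n + 3) k k = (((n : ℝ) + 3) ^ 2 - 1) / 6 := by
  rw [Fin.sum_univ_eq_sum_range (fun k => cyclePotential (n + 3) k k),
    sum_range_cyclePotential_diag (by omega)]
  push_cast
  ring

theorem sum_effRes_cycleGraph_right (u : Fin (n + 3)) :
    ∑ v, effRes (cycleGraph (n + 3)) u v = (((n : ℝ) + 3) ^ 2 - 1) / 6 := by
  simp_rw [effRes_cycleGraph]
  exact (Equiv.subRight u).sum_comp (fun k => cyclePotential (n + 3) k k) |>.trans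
    sum_fin_cyclePotential_diag

theorem sum_effRes_cycleGraph_left (v : Fin (n + 3)) :
    ∑ u, effRes (cycleGraph (n + 3)) u v = (((n : ℝ) + 3) ^ 2 - 1) / 6 := by
  simp_rw [effRes_cycleGraph]
  exact (Equiv.subLeft v).sum_comp (fun k => cyclePotential (n + 3) k k) |>.trans
    sum_fin_cyclePotential_diag

theorem degRes_cycleGraph (n : ℕ) :
    degRes (cycleGraph (n + 3)) = (((n : ℝ) + 3) ^ 3 - (n + 3)) / 3 := by
  simp only [degRes_eq_sum_degree_mul_sum, cycleGraph_degree_three_le, sum_effRes_cycleGraph_right,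
    sum_effRes_cycleGraph_left, Finset.sum_const, Finset.card_univ, Fintype.card_fin, nsmul_eq_mul]
  push_cast
  ring

end Cycle

section CycleWithPendent

variable {n : ℕ}

theorem cycleWithPendent_adj_castSucc {i j : Fin (n + 3)} :
    (cycleWithPendent (n + 4)).Adj i.castSucc j.castSucc ↔ (cycleGraph (n + 3)).Adj i j := by
  rw [cycleWithPendent, fromRel_adj, cycleGraph_adj', Fin.val_sub_eq_one_iff,
    Fin.val_sub_eq_one_iff]
  simp only [Fin.val_castSucc, ne_eq, ← Fin.val_inj]
  omega

theorem cycleWithPendent_adj_castSucc_last {i : Fin (n + 3)} :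
    (cycleWithPendent (n + 4)).Adj i.castSucc (Fin.last _) ↔ i = 0 := by
  rw [cycleWithPendent, fromRel_adj]
  simp only [Fin.val_castSucc, Fin.val_last, ne_eq, ← Fin.val_inj, Fin.val_zero]
  omega

theorem cycleWithPendent_connected : (cycleWithPendent (n + 4)).Connected := by
  let f : cycleGraph (n + 3) →g cycleWithPendent (n + 4) :=
    ⟨Fin.castSucc, cycleWithPendent_adj_castSucc.2⟩
  have hreach : ∀ w, (cycleWithPendent (n + 4)).Reachable (0 : Fin (n + 3)).castSucc w := by
    intro w
    induction w using Fin.lastCases with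
    | last => exact (cycleWithPendent_adj_castSucc_last.2 rfl).reachable
    | cast i => exact (cycleGraph_connected.preconnected 0 i).map f
  exact (connected_iff _).2 ⟨fun v w => (hreach v).symm.trans (hreach w), ⟨0⟩⟩

section Decidable

variable [DecidableRel (cycleWithPendent (n + 4)).Adj]

theorem sum_neighborFinset_cycleWithPendent_castSucc {M : Type*} [AddCommMonoid M]
    (f : Fin (n + 4) → M) (i : Fin (n + 3)) :
    ∑ w ∈ (cycleWithPendent (n + 4)).neighborFinset i.castSucc, f w =
      ∑ j ∈ (cycleGraph (n + 3)).neighborFinset i, f j.castSucc +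
        if i = 0 then f (Fin.last _) else 0 := by
  simp only [neighborFinset_eq_filter, Finset.sum_filter, Fin.sum_univ_castSucc,
    cycleWithPendent_adj_castSucc, cycleWithPendent_adj_castSucc_last]

theorem neighborFinset_cycleWithPendent_last :
    (cycleWithPendent (n + 4)).neighborFinset (Fin.last _) = {(0 : Fin (n + 3)).castSucc} := by
  ext w
  induction w using Fin.lastCases with
  | last => simp
  | cast i => simp [adj_comm _ (Fin.last _), cycleWithPendent_adj_castSucc_last]

theorem cycleWithPendent_degree_castSucc (i : Fin (n + 3)) :
    (cycleWithPendent (n + 4)).degree i.castSucc = 2 + if i = 0 then 1 else 0 := by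
  rw [← card_neighborFinset_eq_degree, Finset.card_eq_sum_ones,
    sum_neighborFinset_cycleWithPendent_castSucc, ← Finset.card_eq_sum_ones,
    card_neighborFinset_eq_degree, cycleGraph_degree_three_le]

theorem cycleWithPendent_degree_last : (cycleWithPendent (n + 4)).degree (Fin.last _) = 1 := by
  rw [← card_neighborFinset_eq_degree, neighborFinset_cycleWithPendent_last,
    Finset.card_singleton]

theorem cycleWithPendent_lapMatrix_mulVec_snoc_castSucc (y : Fin (n + 3) → ℝ) (c : ℝ)
    (i : Fin (n + 3)) :
    ((cycleWithPendent (n + 4)).lapMatrix ℝ *ᵥ Fin.snoc y c) i.castSucc =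
      ((cycleGraph (n + 3)).lapMatrix ℝ *ᵥ y) i + if i = 0 then y 0 - c else 0 := by
  rw [lapMatrix_mulVec_apply_eq_sum_sub, lapMatrix_mulVec_apply_eq_sum_sub,
    sum_neighborFinset_cycleWithPendent_castSucc]
  split_ifs with hi <;> simp [hi]

theorem cycleWithPendent_lapMatrix_mulVec_snoc_last (y : Fin (n + 3) → ℝ) (c : ℝ) :
    ((cycleWithPendent (n + 4)).lapMatrix ℝ *ᵥ Fin.snoc y c) (Fin.last _) = c - y 0 := by
  rw [lapMatrix_mulVec_apply_eq_sum_sub, neighborFinset_cycleWithPendent_last]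
  simp

theorem sum_degree_cycleWithPendent_mul (f : Fin (n + 4) → ℝ) :
    ∑ w, ((cycleWithPendent (n + 4)).degree w : ℝ) * f w =
      2 * ∑ i : Fin (n + 3), f i.castSucc + f (0 : Fin (n + 3)).castSucc + f (Fin.last _) := by
  rw [Fin.sum_univ_castSucc]
  simp only [cycleWithPendent_degree_castSucc, cycleWithPendent_degree_last,
    Nat.cast_add, Nat.cast_ite, Nat.cast_one, Nat.cast_zero, add_mul, ite_mul, one_mul, zero_mul,
    Finset.sum_add_distrib, Finset.sum_ite_eq', Finset.mem_univ, if_true, Finset.mul_sum]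
  push_cast
  ring

end Decidable

theorem effRes_cycleWithPendent_castSucc_castSucc (i j : Fin (n + 3)) :
    effRes (cycleWithPendent (n + 4)) i.castSucc j.castSucc = effRes (cycleGraph (n + 3)) i j := by
  classical
  set y := fun w : Fin (n + 3) => cyclePotential (n + 3) (j - i : Fin (n + 3)) (w - i : Fin (n + 3))
  have hy : (cycleGraph (n + 3)).lapMatrix ℝ *ᵥ y = Pi.single j 1 - Pi.single i 1 :=
    cycleGraph_lapMatrix_mulVec_cyclePotential_sub i j
  rw [effRes_cycleGraph, effRes_eq_of_lapMatrix_mulVec (x := Fin.snoc y (y 0))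
    cycleWithPendent_connected]
  · simp [y]
  · simp [y, cyclePotential_zero]
  · ext w
    induction w using Fin.lastCases with
    | last => simp [cycleWithPendent_lapMatrix_mulVec_snoc_last]
    | cast w => simp [cycleWithPendent_lapMatrix_mulVec_snoc_castSucc, hy, Pi.single_apply]

theorem effRes_cycleWithPendent_castSucc_last (i : Fin (n + 3)) :
    effRes (cycleWithPendent (n + 4)) i.castSucc (Fin.last _) =
      effRes (cycleGraph (n + 3)) i 0 + 1 := by
  classical
  set y := fun w : Fin (n + 3) => cyclePotential (n + 3) (0 - i : Fin (n + 3)) (w - i : Fin (n + 3))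
  have hy : (cycleGraph (n + 3)).lapMatrix ℝ *ᵥ y = Pi.single 0 1 - Pi.single i 1 :=
    cycleGraph_lapMatrix_mulVec_cyclePotential_sub i 0
  rw [effRes_cycleGraph, effRes_eq_of_lapMatrix_mulVec (x := Fin.snoc y (y 0 + 1))
    cycleWithPendent_connected]
  · simp [y]
  · simp [y, cyclePotential_zero]
  · ext w
    induction w using Fin.lastCases with
    | last => simp [cycleWithPendent_lapMatrix_mulVec_snoc_last]
    | cast w =>
      simp only [cycleWithPendent_lapMatrix_mulVec_snoc_castSucc, hy, Pi.sub_apply,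
        Pi.single_apply, Fin.castSucc_inj, Fin.castSucc_ne_last]
      split_ifs <;> simp_all

theorem effRes_cycleWithPendent_last_castSucc (j : Fin (n + 3)) :
    effRes (cycleWithPendent (n + 4)) (Fin.last _) j.castSucc =
      effRes (cycleGraph (n + 3)) 0 j + 1 := by
  classical
  set y := fun w : Fin (n + 3) => cyclePotential (n + 3) j w
  have hy : (cycleGraph (n + 3)).lapMatrix ℝ *ᵥ (y + 1) = Pi.single j 1 - Pi.single 0 1 := by
    rw [mulVec_add, Pi.one_def, lapMatrix_mulVec_const_eq_zero, add_zero]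
    exact cycleGraph_lapMatrix_mulVec_cyclePotential j
  rw [effRes_cycleGraph, effRes_eq_of_lapMatrix_mulVec (x := Fin.snoc (y + 1) 0)
    cycleWithPendent_connected]
  · simp [y]
  · simp
  · ext w
    induction w using Fin.lastCases with
    | last => simp [cycleWithPendent_lapMatrix_mulVec_snoc_last, y, cyclePotential_zero]
    | cast w =>
      simp only [cycleWithPendent_lapMatrix_mulVec_snoc_castSucc, hy, Pi.sub_apply,
        Pi.single_apply, Fin.castSucc_inj, Fin.castSucc_ne_last]
      split_ifs <;> subst_vars <;> simp_all [y, cyclePotential_zero]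

theorem sum_effRes_cycleWithPendent_castSucc_right (i : Fin (n + 3)) :
    ∑ w, effRes (cycleWithPendent (n + 4)) i.castSucc w =
      (((n : ℝ) + 3) ^ 2 - 1) / 6 + effRes (cycleGraph (n + 3)) i 0 + 1 := by
  rw [Fin.sum_univ_castSucc]
  simp only [effRes_cycleWithPendent_castSucc_castSucc,
    effRes_cycleWithPendent_castSucc_last, sum_effRes_cycleGraph_right]
  ring

theorem sum_effRes_cycleWithPendent_last_right :
    ∑ w, effRes (cycleWithPendent (n + 4)) (Fin.last _) w =
      (((n : ℝ) + 3) ^ 2 - 1) / 6 + (n + 3) := by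
  rw [Fin.sum_univ_castSucc]
  simp only [effRes_cycleWithPendent_last_castSucc, effRes_self,
    Finset.sum_add_distrib, sum_effRes_cycleGraph_right, Finset.sum_const, Finset.card_univ,
    Fintype.card_fin, nsmul_eq_mul]
  push_cast
  ring

theorem sum_effRes_cycleWithPendent_castSucc_left (j : Fin (n + 3)) :
    ∑ w, effRes (cycleWithPendent (n + 4)) w j.castSucc =
      (((n : ℝ) + 3) ^ 2 - 1) / 6 + effRes (cycleGraph (n + 3)) 0 j + 1 := by
  rw [Fin.sum_univ_castSucc]
  simp only [effRes_cycleWithPendent_castSucc_castSucc,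
    effRes_cycleWithPendent_last_castSucc, sum_effRes_cycleGraph_left]
  ring

theorem sum_effRes_cycleWithPendent_last_left :
    ∑ w, effRes (cycleWithPendent (n + 4)) w (Fin.last _) =
      (((n : ℝ) + 3) ^ 2 - 1) / 6 + (n + 3) := by
  rw [Fin.sum_univ_castSucc]
  simp only [effRes_cycleWithPendent_castSucc_last, effRes_self,
    Finset.sum_add_distrib, sum_effRes_cycleGraph_left, Finset.sum_const, Finset.card_univ,
    Fintype.card_fin, nsmul_eq_mul]
  push_cast
  ring

theorem degRes_cycleWithPendent (n : ℕ) :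
    degRes (cycleWithPendent (n + 4)) =
      ((n : ℝ) + 5) * (((n : ℝ) + 3) ^ 2 - 1) / 3 + 3 * ((n : ℝ) + 3) + 1 := by
  classical
  simp only [degRes_eq_sum_degree_mul_sum, sum_degree_cycleWithPendent_mul,
    sum_effRes_cycleWithPendent_castSucc_right, sum_effRes_cycleWithPendent_last_right,
    sum_effRes_cycleWithPendent_castSucc_left, sum_effRes_cycleWithPendent_last_left,
    Finset.sum_add_distrib, sum_effRes_cycleGraph_right, sum_effRes_cycleGraph_left, effRes_self,
    Finset.sum_const, Finset.card_univ, Fintype.card_fin, nsmul_eq_mul]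
  push_cast
  ring

end CycleWithPendent

end SimpleGraph

/-- `D_R(C_h) - D_R(S) = (h² - 8h + 6)/3` for `h ≥ 4`. -/
theorem stmt_4 (h : ℕ) (hh : 4 ≤ h) :
    degRes (SimpleGraph.cycleGraph h) - degRes (cycleWithPendent h) =
      ((h : ℝ) ^ 2 - 8 * h + 6) / 3 := by
  obtain ⟨n, rfl⟩ : ∃ n, h = n + 4 := ⟨h - 4, by omega⟩
  rw [show SimpleGraph.cycleGraph (n + 4) = SimpleGraph.cycleGraph (n + 1 + 3) from rfl,
    SimpleGraph.degRes_cycleGraph, SimpleGraph.degRes_cycleWithPendent]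
  push_cast
  ring
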